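/- arXiv:1603.09173 — 2 statements merged into one kernel-verified Lean document; each statement's English description precedes it below -/
import Mathlib

section
/- Let A be a finite nonempty set, X the simplex in ℝ^A with interior X°, and v : X → ℝ^A continuous. Let h : X → ℝ be continuous, twice continuously differentiable on an open set containing X° with Hessian H(y) positive definite at each y ∈ X°. Let p, q ∈ X with p strictly dominated by q: v(x)·p < v(x)·q for all x ∈ X. Let x : [0,∞) → X° be differentiable with x'(t) = V(x(t)), where V(y) is the H(y)-projection of H(y)⁻¹ v(y) onto ℝ₀^A = {z : ∑_α z_α = 0}. Then (d/dt)(D_h(p, x(t)) − D_h(q, x(t))) = v(x(t))·(q − p) for all t, and D_h(p, x(t)) → ∞ as t → ∞. -/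
/-!
Since `V(y)` is the `H(y)`-projection of `H(y)⁻¹ v(y)` onto `ℝ₀^A`, the residual is
`H(y)`-orthogonal to `p - q ∈ ℝ₀^A`, i.e. `D²h(y)(V(y), p - q) = v(y)·(p - q)`. As
`D_h(p, y) - D_h(q, y) = h(p) - h(q) - Dh(y)(p - q)`, this gives the derivative along `x(t)`.
By compactness `v·(q - p) ≥ ε > 0` on the simplex, so the difference grows at least like `ε t`,
while `D_h(q, x(t)) ≥ 0` because `h` is convex on the segment from `x(t)` to `q`.
-/

open Matrix Filter

noncomputable section

/-- The relative interior of the simplex (all coordinates positive, summing to one). -/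
def intSimplex (A : Type*) [Fintype A] : Set (A → ℝ) :=
  {x | (∀ α, 0 < x α) ∧ (∑ α, x α) = 1}

/-- The quadratic form `wᵀ G w = ‖w‖_G²` associated to a matrix `G`. -/
def qform {A : Type*} [Fintype A] (G : Matrix A A ℝ) (w : A → ℝ) : ℝ :=
  w ⬝ᵥ G.mulVec w

/-- `V` is the `G`-projection of `w` onto `C`. -/
def IsGProj {A : Type*} [Fintype A] (G : Matrix A A ℝ) (C : Set (A → ℝ))
    (w V : A → ℝ) : Prop :=
  V ∈ C ∧ ∀ z ∈ C, qform G (w - V) ≤ qform G (w - z)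

/-- The Hessian matrix of `h` at `y`. -/
def hessMat {A : Type*} [Fintype A] [DecidableEq A] (h : (A → ℝ) → ℝ) (y : A → ℝ) :
    Matrix A A ℝ :=
  Matrix.of fun α β => fderiv ℝ (fderiv ℝ h) y (Pi.single α 1) (Pi.single β 1)

open Set

def zeroSumSubspace (A : Type*) [Fintype A] : Submodule ℝ (A → ℝ) where
  carrier := {z | ∑ α, z α = 0}
  add_mem' {z w} hz hw := by simp_all [Finset.sum_add_distrib]
  zero_mem' := by simp
  smul_mem' c z hz := by simp_all [← Finset.mul_sum]

section LinearAlgebra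

variable {A : Type*} [Fintype A]

lemma Matrix.IsSymm.dotProduct_mulVec_comm {G : Matrix A A ℝ} (hG : G.IsSymm) (a b : A → ℝ) :
    a ⬝ᵥ G *ᵥ b = G *ᵥ a ⬝ᵥ b := by
  rw [dotProduct_mulVec, ← mulVec_transpose, hG.eq]

lemma qform_sub_smul {G : Matrix A A ℝ} (hG : G.IsSymm) (a z : A → ℝ) (s : ℝ) :
    qform G (a - s • z) = qform G a - 2 * s * (G *ᵥ a ⬝ᵥ z) + s ^ 2 * qform G z := by
  simp only [qform, mulVec_sub, mulVec_smul, dotProduct_sub, sub_dotProduct, smul_dotProduct,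
    dotProduct_smul, smul_eq_mul, hG.dotProduct_mulVec_comm a z, dotProduct_comm z (G *ᵥ a)]
  ring

lemma IsGProj.mulVec_sub_dotProduct_eq_zero {G : Matrix A A ℝ} (hG : G.IsSymm)
    {C : Submodule ℝ (A → ℝ)} {w V : A → ℝ} (hV : IsGProj G C w V) {z : A → ℝ} (hz : z ∈ C) :
    G *ᵥ (w - V) ⬝ᵥ z = 0 := by
  have hquad : ∀ s : ℝ, 0 ≤ qform G z * (s * s) + (-2 * (G *ᵥ (w - V) ⬝ᵥ z)) * s + 0 := by
    intro s
    have hmin := hV.2 (V + s • z) (C.add_mem hV.1 (C.smul_mem s hz))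
    rw [show w - (V + s • z) = (w - V) - s • z by abel, qform_sub_smul hG] at hmin
    linarith
  have := discrim_le_zero hquad
  rw [discrim] at this
  nlinarith

lemma IsGProj.dotProduct_mulVec_eq [DecidableEq A] {G : Matrix A A ℝ} (hG : G.IsSymm)
    (hdet : IsUnit G.det) {C : Submodule ℝ (A → ℝ)} {u V : A → ℝ} (hV : IsGProj G C (G⁻¹ *ᵥ u) V)
    {z : A → ℝ} (hz : z ∈ C) : V ⬝ᵥ G *ᵥ z = u ⬝ᵥ z := by
  have horth := hV.mulVec_sub_dotProduct_eq_zero hG hz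
  rw [mulVec_sub, mulVec_mulVec, mul_nonsing_inv G hdet, one_mulVec, sub_dotProduct] at horth
  rw [hG.dotProduct_mulVec_comm]
  linarith

end LinearAlgebra

section Calculus

variable {E : Type*} [NormedAddCommGroup E] [NormedSpace ℝ E]

def bregman (h : E → ℝ) (p y : E) : ℝ := h p - h y - fderiv ℝ h y (p - y)

lemma bregman_sub_bregman (h : E → ℝ) (p q y : E) :
    bregman h p y - bregman h q y = h p - h q - fderiv ℝ h y (p - q) := by
  simp only [bregman, map_sub]
  ring

lemma ContDiffOn.hasFDerivAt_fderiv {h : E → ℝ} {U : Set E} (hh : ContDiffOn ℝ 2 h U)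
    (hU : IsOpen U) {y : E} (hy : y ∈ U) :
    HasFDerivAt (fderiv ℝ h) (fderiv ℝ (fderiv ℝ h) y) y :=
  (((hh.contDiffAt (hU.mem_nhds hy)).fderiv_right (m := 1) le_rfl).differentiableAt
    one_ne_zero).hasFDerivAt

lemma HasDerivWithinAt.fderiv_apply {h : E → ℝ} {U : Set E} (hh : ContDiffOn ℝ 2 h U)
    (hU : IsOpen U) {x : ℝ → E} {x' : E} {s : Set ℝ} {t : ℝ} (hx : HasDerivWithinAt x x' s t)
    (hxU : x t ∈ U) (r : E) :
    HasDerivWithinAt (fun τ => fderiv ℝ h (x τ) r) (fderiv ℝ (fderiv ℝ h) (x t) x' r) s t :=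
  (ContinuousLinearMap.apply ℝ ℝ r).hasFDerivAt.comp_hasDerivWithinAt t
    ((hh.hasFDerivAt_fderiv hU hxU).comp_hasDerivWithinAt t hx)

lemma bregman_nonneg_of_fderiv_fderiv_nonneg {h : E → ℝ} {U : Set E} (hh : ContDiffOn ℝ 2 h U)
    (hU : IsOpen U) {y r : E} (hseg : ∀ s ∈ Ico (0 : ℝ) 1, y + s • (r - y) ∈ U)
    (hcont : ContinuousOn h (segment ℝ y r))
    (hconv : ∀ s ∈ Ioo (0 : ℝ) 1,
      0 ≤ fderiv ℝ (fderiv ℝ h) (y + s • (r - y)) (r - y) (r - y)) :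
    0 ≤ bregman h r y := by
  set γ : ℝ → E := fun s => y + s • (r - y)
  have hγ : ∀ s, HasDerivAt γ (r - y) s := fun s => by
    simpa only [one_smul] using ((hasDerivAt_id' s).smul_const (r - y)).const_add y
  have hg : ∀ s ∈ Ico (0 : ℝ) 1, HasDerivAt (h ∘ γ) (fderiv ℝ h (γ s) (r - y)) s := fun s hs =>
    (((hh.contDiffAt (hU.mem_nhds (hseg s hs))).differentiableAt two_ne_zero).hasFDerivAt
      ).comp_hasDerivAt s (hγ s)
  have hg' : ∀ s ∈ Ico (0 : ℝ) 1, HasDerivAt (fun τ => fderiv ℝ h (γ τ) (r - y))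
      (fderiv ℝ (fderiv ℝ h) (γ s) (r - y) (r - y)) s := fun s hs =>
    hasDerivWithinAt_univ.mp ((hγ s).hasDerivWithinAt.fderiv_apply hh hU (hseg s hs) _)
  have hIoo : Ioo (0 : ℝ) 1 ⊆ Ico 0 1 := Ioo_subset_Ico_self
  have hconvex : ConvexOn ℝ (Icc 0 1) (h ∘ γ) := by
    refine convexOn_of_hasDerivWithinAt2_nonneg (f' := fun s => fderiv ℝ h (γ s) (r - y))
      (f'' := fun s => fderiv ℝ (fderiv ℝ h) (γ s) (r - y) (r - y)) (convex_Icc 0 1) ?_ ?_ ?_ ?_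
    · refine hcont.comp (Continuous.continuousOn (by fun_prop)) fun s hs => ?_
      rw [segment_eq_image']
      exact mem_image_of_mem _ hs
    all_goals rw [interior_Icc]
    · exact fun s hs => (hg s (hIoo hs)).hasDerivWithinAt
    · exact fun s hs => (hg' s (hIoo hs)).hasDerivWithinAt
    · exact hconv
  have := hconvex.le_slope_of_hasDerivAt (by simp) (by simp) one_pos (hg 0 (by simp))
  simp [slope_def_field, γ] at this
  rw [bregman, map_sub]
  linarith

lemma tendsto_atTop_of_hasDerivWithinAt_Ici {f f' : ℝ → ℝ} {a ε : ℝ} (hε : 0 < ε)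
    (hf : ∀ t, a ≤ t → HasDerivWithinAt f (f' t) (Ici a) t) (hf' : ∀ t, a < t → ε ≤ f' t) :
    Tendsto f atTop atTop := by
  have hderiv : ∀ t, a < t → HasDerivAt f (f' t) t := fun t ht =>
    (hf t ht.le).hasDerivAt (Ici_mem_nhds ht)
  have hcont : ContinuousOn f (Ici a) := fun t ht => (hf t ht).continuousWithinAt
  have hdiff : DifferentiableOn ℝ f (interior (Ici a)) := by
    rw [interior_Ici]
    exact fun t ht => (hderiv t ht).differentiableAt.differentiableWithinAt
  have hle : ∀ t ∈ interior (Ici a), ε ≤ deriv f t := by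
    rw [interior_Ici]
    exact fun t ht => (hderiv t ht).deriv ▸ hf' t ht
  have hgrow : ∀ t, a ≤ t → ε * (t - a) ≤ f t - f a := fun t ht =>
    (convex_Ici a).mul_sub_le_image_sub_of_le_deriv hcont hdiff hle a self_mem_Ici t ht ht
  refine tendsto_atTop_mono' _ ?_ <|
    tendsto_atTop_add_const_right _ (f a - ε * a) (tendsto_id.const_mul_atTop hε)
  filter_upwards [eventually_ge_atTop a] with t ht
  show ε * t + (f a - ε * a) ≤ f t
  linarith [hgrow t ht]

end Calculus

section Simplex

variable {A : Type*} [Fintype A]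

lemma intSimplex_subset_stdSimplex : intSimplex A ⊆ stdSimplex ℝ A :=
  fun _ hy => ⟨fun α => (hy.1 α).le, hy.2⟩

lemma add_smul_sub_mem_intSimplex {y r : A → ℝ} (hy : y ∈ intSimplex A)
    (hr : r ∈ stdSimplex ℝ A) {s : ℝ} (hs : s ∈ Ico (0 : ℝ) 1) :
    y + s • (r - y) ∈ intSimplex A := by
  refine ⟨fun α => ?_, ?_⟩
  · have := hy.1 α
    have := hr.1 α
    simp only [Pi.add_apply, Pi.smul_apply, Pi.sub_apply, smul_eq_mul]
    nlinarith [hs.1, hs.2]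
  · simp [Finset.sum_add_distrib, ← Finset.mul_sum, Finset.sum_sub_distrib, hy.2, hr.2]

lemma sub_mem_zeroSumSubspace {p q : A → ℝ} (hp : p ∈ stdSimplex ℝ A)
    (hq : q ∈ stdSimplex ℝ A) : p - q ∈ zeroSumSubspace A := by
  simp [zeroSumSubspace, Finset.sum_sub_distrib, hp.2, hq.2]

variable [DecidableEq A]

lemma fderiv_fderiv_apply_eq_dotProduct_hessMat (h : (A → ℝ) → ℝ) (y u w : A → ℝ) :
    fderiv ℝ (fderiv ℝ h) y u w = u ⬝ᵥ hessMat h y *ᵥ w := by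
  have : hessMat h y = LinearMap.toMatrix₂' ℝ (fderiv ℝ (fderiv ℝ h) y).toLinearMap₁₂ := by
    ext α β
    simp [hessMat, LinearMap.toMatrix₂'_apply]
  rw [this, ← Matrix.toLinearMap₂'_apply', Matrix.toLinearMap₂'_toMatrix']
  rfl

lemma bregman_nonneg_of_mem_intSimplex {h : (A → ℝ) → ℝ} {U : Set (A → ℝ)} (hU : IsOpen U)
    (hXU : intSimplex A ⊆ U) (hhcont : ContinuousOn h (stdSimplex ℝ A))
    (hh : ContDiffOn ℝ 2 h U) (hpd : ∀ y ∈ intSimplex A, (hessMat h y).PosDef)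
    {y r : A → ℝ} (hy : y ∈ intSimplex A) (hr : r ∈ stdSimplex ℝ A) :
    0 ≤ bregman h r y := by
  refine bregman_nonneg_of_fderiv_fderiv_nonneg hh hU
    (fun s hs => hXU (add_smul_sub_mem_intSimplex hy hr hs))
    (hhcont.mono ((convex_stdSimplex ℝ A).segment_subset (intSimplex_subset_stdSimplex hy) hr))
    fun s hs => ?_
  rw [fderiv_fderiv_apply_eq_dotProduct_hessMat]
  simpa using (hpd _ (add_smul_sub_mem_intSimplex hy hr (Ioo_subset_Ico_self hs))
    ).posSemidef.dotProduct_mulVec_nonneg (r - y)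

lemma HasDerivWithinAt.bregman_sub_bregman_of_isGProj {h : (A → ℝ) → ℝ} {U : Set (A → ℝ)}
    (hh : ContDiffOn ℝ 2 h U) (hU : IsOpen U) {x : ℝ → (A → ℝ)} {u w : A → ℝ} {s : Set ℝ}
    {t : ℝ} (hx : HasDerivWithinAt x w s t) (hxU : x t ∈ U) (hpd : (hessMat h (x t)).PosDef)
    (hw : IsGProj (hessMat h (x t)) (zeroSumSubspace A) ((hessMat h (x t))⁻¹ *ᵥ u) w)
    {p q : A → ℝ} (hpq : p - q ∈ zeroSumSubspace A) :
    HasDerivWithinAt (fun τ => bregman h p (x τ) - bregman h q (x τ)) (u ⬝ᵥ (q - p)) s t := by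
  have hval : fderiv ℝ (fderiv ℝ h) (x t) w (p - q) = u ⬝ᵥ (p - q) := by
    rw [fderiv_fderiv_apply_eq_dotProduct_hessMat, hw.dotProduct_mulVec_eq
      (isHermitian_iff_isSymm.mp hpd.isHermitian)
      ((Matrix.isUnit_iff_isUnit_det _).mp hpd.isUnit) hpq]
  rw [funext fun τ => bregman_sub_bregman h p q (x τ), ← neg_sub p q, dotProduct_neg, ← hval]
  exact (hx.fderiv_apply hh hU hxU (p - q)).const_sub (h p - h q)

end Simplex

theorem stmt_13_general {A : Type*} [Fintype A] [DecidableEq A]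
    (v : (A → ℝ) → (A → ℝ)) (hvcont : ContinuousOn v (stdSimplex ℝ A))
    (h : (A → ℝ) → ℝ) (hhcont : ContinuousOn h (stdSimplex ℝ A))
    (U : Set (A → ℝ)) (hU : IsOpen U) (hXU : intSimplex A ⊆ U)
    (hh : ContDiffOn ℝ 2 h U)
    (hpd : ∀ y ∈ intSimplex A, (hessMat h y).PosDef)
    (p q : A → ℝ) (hp : p ∈ stdSimplex ℝ A) (hq : q ∈ stdSimplex ℝ A)
    (hdom : ∀ y ∈ stdSimplex ℝ A, v y ⬝ᵥ p < v y ⬝ᵥ q)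
    (V : (A → ℝ) → (A → ℝ))
    (hV : ∀ y ∈ intSimplex A,
      IsGProj (hessMat h y) {z : A → ℝ | (∑ α, z α) = 0}
        ((hessMat h y)⁻¹.mulVec (v y)) (V y))
    (x : ℝ → (A → ℝ)) (hxint : ∀ t : ℝ, 0 ≤ t → x t ∈ intSimplex A)
    (hx' : ∀ t : ℝ, 0 ≤ t → HasDerivWithinAt x (V (x t)) (Set.Ici 0) t) :
    (∀ t : ℝ, 0 ≤ t →
      HasDerivWithinAt
        (fun s => (h p - h (x s) - fderiv ℝ h (x s) (p - x s)) -
          (h q - h (x s) - fderiv ℝ h (x s) (q - x s)))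
        (v (x t) ⬝ᵥ (q - p)) (Set.Ici 0) t) ∧
    Tendsto (fun t => h p - h (x t) - fderiv ℝ h (x t) (p - x t)) atTop atTop := by
  have hderiv : ∀ t, 0 ≤ t → HasDerivWithinAt (fun s => bregman h p (x s) - bregman h q (x s))
      (v (x t) ⬝ᵥ (q - p)) (Ici 0) t := fun t ht =>
    (hx' t ht).bregman_sub_bregman_of_isGProj hh hU (hXU (hxint t ht)) (hpd _ (hxint t ht))
      (hV _ (hxint t ht)) (sub_mem_zeroSumSubspace hp hq)
  refine ⟨hderiv, ?_⟩
  obtain ⟨ε, hε, hεle⟩ := (isCompact_stdSimplex ℝ A).exists_forall_le' (a := 0)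
    (f := fun y => v y ⬝ᵥ (q - p))
    ((continuous_id.dotProduct continuous_const).comp_continuousOn hvcont)
    fun y hy => by simpa [dotProduct_sub, sub_pos] using hdom y hy
  refine tendsto_atTop_mono' _ ?_ <| tendsto_atTop_of_hasDerivWithinAt_Ici hε hderiv
    fun t ht => hεle _ (intSimplex_subset_stdSimplex (hxint t ht.le))
  filter_upwards [eventually_ge_atTop 0] with t ht
  exact sub_le_self _ (bregman_nonneg_of_mem_intSimplex hU hXU hhcont hh hpd (hxint t ht) hq)

/-- extinction of strictly dominated strategies under continuous Hessian
dynamics.  Along interior solutions `x'(t) = V(x(t))`, the difference of Bregman divergences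
`D_h(p, x(t)) − D_h(q, x(t))` has derivative `v(x(t))·(q − p)`, and `D_h(p, x(t)) → ∞`. -/
theorem stmt_13 {A : Type*} [Fintype A] [DecidableEq A] [Nonempty A]
    (v : (A → ℝ) → (A → ℝ)) (hvcont : ContinuousOn v (stdSimplex ℝ A))
    (h : (A → ℝ) → ℝ) (hhcont : ContinuousOn h (stdSimplex ℝ A))
    (U : Set (A → ℝ)) (hU : IsOpen U) (hXU : intSimplex A ⊆ U)
    (hh : ContDiffOn ℝ 2 h U)
    (hpd : ∀ y ∈ intSimplex A, (hessMat h y).PosDef)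
    (p q : A → ℝ) (hp : p ∈ stdSimplex ℝ A) (hq : q ∈ stdSimplex ℝ A)
    (hdom : ∀ y ∈ stdSimplex ℝ A, v y ⬝ᵥ p < v y ⬝ᵥ q)
    (V : (A → ℝ) → (A → ℝ))
    (hV : ∀ y ∈ intSimplex A,
      IsGProj (hessMat h y) {z : A → ℝ | (∑ α, z α) = 0}
        ((hessMat h y)⁻¹.mulVec (v y)) (V y))
    (x : ℝ → (A → ℝ)) (hxint : ∀ t : ℝ, 0 ≤ t → x t ∈ intSimplex A)
    (hx' : ∀ t : ℝ, 0 ≤ t → HasDerivWithinAt x (V (x t)) (Set.Ici 0) t) :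
    (∀ t : ℝ, 0 ≤ t →
      HasDerivWithinAt
        (fun s => (h p - h (x s) - fderiv ℝ h (x s) (p - x s)) -
          (h q - h (x s) - fderiv ℝ h (x s) (q - x s)))
        (v (x t) ⬝ᵥ (q - p)) (Set.Ici 0) t) ∧
    Tendsto (fun t => h p - h (x t) - fderiv ℝ h (x t) (p - x t)) atTop atTop :=
  stmt_13_general v hvcont h hhcont U hU hXU hh hpd p q hp hq hdom V hV x hxint hx'
end
end

section
/- Let A be a finite nonempty set, X the simplex in ℝ^A, and V : X → ℝ^A Lipschitz continuous with ∑_α V_α(x) = 0 for all x ∈ X and V_α(x) = 0 whenever x_α = 0. Then for every x₀ ∈ X there exists a unique differentiable x : ℝ → X with x(0) = x₀ and x'(t) = V(x(t)) for all t ∈ ℝ; moreover, supp(x(t)) = supp(x₀) for all t ∈ ℝ (each solution has constant support). -/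
/-!
Extend `V` from the simplex `X` to a bounded Lipschitz field `W` on `ℝ^A`; the flow of `W` exists
for all times. The hypotheses on `V` say exactly that `x + h V(x) ∈ X` for all small `h` of either
sign, so by a Nagumo-type argument (Grönwall applied to `t ↦ infDist (y t) X`) the solution
through a point of `X` stays in `X`, where it solves `ẋ = V(x)`. Uniqueness is Grönwall's
inequality on `X`. The same tangency holds for each face `{x ∈ X | x α = 0}`, so
solutions cannot enter or leave a face: the support is constant.
-/

open Filter Set Metric Topology
open scoped NNReal

theorem eventually_add_smul_mem_stdSimplex {ι : Type*} [Fintype ι] {x v : ι → ℝ}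
    (hx : x ∈ stdSimplex ℝ ι) (hv : ∑ i, v i = 0) (hxv : ∀ i, x i = 0 → v i = 0) :
    ∀ᶠ h in 𝓝 (0 : ℝ), x + h • v ∈ stdSimplex ℝ ι := by
  have hnonneg : ∀ i, ∀ᶠ h in 𝓝 (0 : ℝ), 0 ≤ x i + h * v i := by
    intro i
    rcases (hx.1 i).eq_or_lt with hxi | hxi
    · simp [← hxi, hxv i hxi.symm]
    · have hcont : Continuous fun h : ℝ => x i + h * v i := by fun_prop
      exact (hcont.tendsto' 0 (x i) (by simp)).eventually (eventually_ge_nhds hxi)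
  filter_upwards [eventually_all.2 hnonneg] with h hh
  refine ⟨fun i => hh i, ?_⟩
  simp [Finset.sum_add_distrib, ← Finset.mul_sum, hx.2, hv]

theorem LipschitzOnWith.exists_lipschitzWith_norm_le_extension {α ι : Type*}
    [PseudoMetricSpace α] [Fintype ι] {f : α → ι → ℝ} {s : Set α} {K : ℝ≥0}
    (hf : LipschitzOnWith K f s) {C : ℝ} (hC0 : 0 ≤ C) (hC : ∀ x ∈ s, ‖f x‖ ≤ C) :
    ∃ g : α → ι → ℝ, LipschitzWith K g ∧ EqOn f g s ∧ ∀ x, ‖g x‖ ≤ C := by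
  obtain ⟨g, hg, hfg⟩ := hf.extend_pi
  refine ⟨fun x i => max (min (g x i) C) (-C), LipschitzWith.of_dist_le_mul fun x y => ?_,
    fun x hx => ?_, fun x => (pi_norm_le_iff_of_nonneg hC0).2 fun i => ?_⟩
  · refine (dist_pi_le_iff (by positivity)).2 fun i => ?_
    simpa using ((((LipschitzWith.eval i).comp hg).min_const C).max_const (-C)).dist_le_mul x y
  · ext i
    have hfi := abs_le.1 ((norm_le_pi_norm (f x) i).trans (hC x hx))
    show _ = max (min (g x i) C) (-C)
    rw [← hfg hx, min_eq_left hfi.2, max_eq_left hfi.1]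
  · rw [Real.norm_eq_abs, abs_le]
    exact ⟨le_max_right _ _, max_le (min_le_right _ _) (by linarith)⟩

section

variable {E : Type*} [NormedAddCommGroup E] [NormedSpace ℝ E]

theorem exists_forall_abs_lt_hasDerivAt_of_lipschitzWith [CompleteSpace E] {W : E → E}
    {K C : ℝ≥0} (hW : LipschitzWith K W) (hC : ∀ x, ‖W x‖ ≤ C) (x₀ : E) (T : ℝ≥0) :
    ∃ y : ℝ → E, y 0 = x₀ ∧ ∀ t, |t| < (T : ℝ) → HasDerivAt y (W (y t)) t := by
  have hpl : IsPicardLindelof (fun _ => W) (tmin := -T) (tmax := T)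
      ⟨0, by simp⟩ x₀ (C * T) 0 C K :=
    { lipschitzOnWith := fun _ _ => hW.lipschitzOnWith
      continuousOn := fun _ _ => continuousOn_const
      norm_le := fun _ _ x _ => hC x
      mul_max_le := by simp }
  obtain ⟨y, hy0, hy⟩ := hpl.exists_eq_forall_mem_Icc_hasDerivWithinAt₀
  refine ⟨y, hy0, fun t ht => ?_⟩
  obtain ⟨htl, htr⟩ := abs_lt.1 ht
  exact (hy t ⟨htl.le, htr.le⟩).hasDerivAt (Icc_mem_nhds htl htr)

theorem exists_forall_hasDerivAt_of_lipschitzWith [CompleteSpace E] {W : E → E}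
    {K C : ℝ≥0} (hW : LipschitzWith K W) (hC : ∀ x, ‖W x‖ ≤ C) (x₀ : E) :
    ∃ y : ℝ → E, y 0 = x₀ ∧ ∀ t, HasDerivAt y (W (y t)) t := by
  choose F hF0 hF using fun n : ℕ => exists_forall_abs_lt_hasDerivAt_of_lipschitzWith hW hC x₀ n
  simp only [NNReal.coe_natCast] at hF
  have hagree : ∀ m n : ℕ, ∀ t : ℝ, |t| < m → |t| < n → F m t = F n t := by
    intro m n t hm hn
    set r : ℝ := min m n
    have hsol : ∀ k : ℕ, r ≤ k → ∀ s ∈ Ioo (-r) r, HasDerivAt (F k) (W (F k s)) s ∧ F k s ∈ univ :=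
      fun k hk s hs => ⟨hF k s (abs_lt.2 ⟨by linarith [hs.1], by linarith [hs.2]⟩), trivial⟩
    have htr : |t| < r := lt_min hm hn
    exact ODE_solution_unique_of_mem_Ioo (fun _ _ => hW.lipschitzOnWith)
      (t₀ := 0) ⟨by linarith [abs_nonneg t], by linarith [abs_nonneg t]⟩
      (hsol m (min_le_left _ _)) (hsol n (min_le_right _ _)) ((hF0 m).trans (hF0 n).symm)
      (abs_lt.1 htr)
  have hlt : ∀ t : ℝ, |t| < (⌊|t|⌋₊ + 1 : ℕ) := fun t => by
    exact_mod_cast Nat.lt_floor_add_one |t|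
  refine ⟨fun t => F (⌊|t|⌋₊ + 1) t, hF0 _, fun t => ?_⟩
  have heq : (fun s => F (⌊|s|⌋₊ + 1) s) =ᶠ[𝓝 t] F (⌊|t|⌋₊ + 1) := by
    filter_upwards [(isOpen_lt continuous_abs continuous_const).mem_nhds (hlt t)] with s hs
    exact hagree _ _ s (hlt s) hs
  show HasDerivAt _ (W (F _ t)) t
  exact (hF _ t (hlt t)).congr_of_eventuallyEq heq

theorem tendsto_sub_const_nhdsGT (s : ℝ) : Tendsto (fun z => z - s) (𝓝[>] s) (𝓝[>] 0) :=
  tendsto_nhdsWithin_iff.2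
    ⟨((continuous_sub_right s).tendsto' s 0 (sub_self s)).mono_left nhdsWithin_le_nhds,
      eventually_nhdsWithin_of_forall fun z hz => show 0 < z - s from sub_pos.2 hz⟩

theorem infDist_le_dist_add_norm_add_mul_of_add_smul_mem {W : E → E} {K : ℝ≥0}
    (hW : LipschitzWith K W) {S : Set E} {p : E} {h : ℝ} (hh : 0 ≤ h) (hp : p + h • W p ∈ S)
    (x x' : E) : infDist x' S ≤ dist x p + ‖x' - x - h • W x‖ + h * (K * dist x p) :=
  calc infDist x' S ≤ dist x' (p + h • W p) := infDist_le_dist_of_mem hp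
    _ = ‖(x - p) + (x' - x - h • W x) + h • (W x - W p)‖ := by
      rw [dist_eq_norm]
      congr 1
      module
    _ ≤ ‖x - p‖ + ‖x' - x - h • W x‖ + h * ‖W x - W p‖ := by
      refine norm_add₃_le.trans_eq ?_
      rw [norm_smul, Real.norm_of_nonneg hh]
    _ ≤ dist x p + ‖x' - x - h • W x‖ + h * (K * dist x p) := by
      rw [← dist_eq_norm x p, ← dist_eq_norm (W x) (W p)]
      gcongr
      exact hW.dist_le_mul x p

theorem mem_of_hasDerivAt_of_eventually_add_smul_mem [ProperSpace E] {W : E → E} {K : ℝ≥0}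
    (hW : LipschitzWith K W) {S : Set E} (hS : IsClosed S)
    (htan : ∀ x ∈ S, ∀ᶠ h in 𝓝[>] (0 : ℝ), x + h • W x ∈ S)
    {y : ℝ → E} (hy : ∀ t, HasDerivAt y (W (y t)) t) {t₀ t : ℝ} (ht : t₀ ≤ t) (hy₀ : y t₀ ∈ S) :
    y t ∈ S := by
  have hne : S.Nonempty := ⟨_, hy₀⟩
  set d : ℝ → ℝ := fun s => infDist (y s) S
  have hd : Continuous d :=
    (continuous_infDist_pt S).comp (continuous_iff_continuousAt.2 fun s => (hy s).continuousAt)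
  have hslope : ∀ s r, K * d s < r → ∀ᶠ z in 𝓝[>] s, (z - s)⁻¹ * (d z - d s) < r := by
    intro s r hr
    -- compare `y z` with `p + (z - s) • W p ∈ S`, where `p` is a point of `S` nearest to `y s`
    obtain ⟨p, hpS, hp⟩ := hS.exists_infDist_eq_dist hne (y s)
    have hderiv : Tendsto (slope y s) (𝓝[>] s) (𝓝 (W (y s))) :=
      (hasDerivAt_iff_tendsto_slope.1 (hy s)).mono_left
        (nhdsWithin_mono _ fun _ hz => ne_of_gt hz)
    filter_upwards [self_mem_nhdsWithin, (tendsto_sub_const_nhdsGT s).eventually (htan p hpS),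
      Metric.tendsto_nhds.1 hderiv _ (sub_pos.2 hr)] with z (hz : s < z) hzS hzd
    have hh : 0 < z - s := sub_pos.2 hz
    have hdz := infDist_le_dist_add_norm_add_mul_of_add_smul_mem hW hh.le hzS (y s) (y z)
    rw [← hp, show y z - y s - (z - s) • W (y s) = (z - s) • (slope y s z - W (y s)) by
      rw [slope_def_module, smul_sub, smul_inv_smul₀ hh.ne'], norm_smul, Real.norm_of_nonneg hh.le,
      ← dist_eq_norm] at hdz
    rw [inv_mul_lt_iff₀ hh]
    nlinarith
  have hgronwall := le_gronwallBound_of_liminf_deriv_right_le (f := d) (f' := fun s => K * d s)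
    (δ := 0) (K := K) (ε := 0) hd.continuousOn (fun s _ r hr => (hslope s r hr).frequently)
    (by simp [d, (hS.mem_iff_infDist_zero hne).1 hy₀]) (fun _ _ => by simp) t ⟨ht, le_rfl⟩
  rw [gronwallBound_ε0_δ0] at hgronwall
  exact (hS.mem_iff_infDist_zero hne).2 (le_antisymm hgronwall infDist_nonneg)

theorem mem_of_hasDerivAt_of_eventually_add_smul_mem_nhds [ProperSpace E] {W : E → E} {K : ℝ≥0}
    (hW : LipschitzWith K W) {S : Set E} (hS : IsClosed S)
    (htan : ∀ x ∈ S, ∀ᶠ h in 𝓝 (0 : ℝ), x + h • W x ∈ S)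
    {y : ℝ → E} (hy : ∀ t, HasDerivAt y (W (y t)) t) {t₀ : ℝ} (hy₀ : y t₀ ∈ S) (t : ℝ) :
    y t ∈ S := by
  rcases le_total t₀ t with ht | ht
  · exact mem_of_hasDerivAt_of_eventually_add_smul_mem hW hS
      (fun x hx => (htan x hx).filter_mono nhdsWithin_le_nhds) hy ht hy₀
  · have hback := mem_of_hasDerivAt_of_eventually_add_smul_mem (W := -W) (y := fun s => y (-s))
      hW.neg hS (fun x hx => ?_) (fun s => ?_) (neg_le_neg ht) (by simpa using hy₀)
    · simpa using hback
    · filter_upwards [((continuous_neg.tendsto' 0 0 neg_zero).eventually (htan x hx)).filter_mono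
        nhdsWithin_le_nhds] with h hh
      simpa using hh
    · simpa [Function.comp_def] using (hy (-s)).scomp s (hasDerivAt_neg s)

end

theorem stmt_19_general {A : Type*} [Fintype A]
    (V : (A → ℝ) → (A → ℝ)) (K : NNReal) (hV : LipschitzOnWith K V (stdSimplex ℝ A))
    (hsum : ∀ x ∈ stdSimplex ℝ A, (∑ α, V x α) = 0)
    (hbd : ∀ x ∈ stdSimplex ℝ A, ∀ α : A, x α = 0 → V x α = 0) :
    ∀ x₀ ∈ stdSimplex ℝ A,
      (∃! x : ℝ → (A → ℝ), (∀ t : ℝ, x t ∈ stdSimplex ℝ A) ∧ x 0 = x₀ ∧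
        ∀ t : ℝ, HasDerivAt x (V (x t)) t) ∧
      (∀ x : ℝ → (A → ℝ), (∀ t : ℝ, x t ∈ stdSimplex ℝ A) → x 0 = x₀ →
        (∀ t : ℝ, HasDerivAt x (V (x t)) t) →
        ∀ t : ℝ, ∀ α : A, (x t α = 0 ↔ x₀ α = 0)) := by
  intro x₀ hx₀
  set S := stdSimplex ℝ A
  obtain ⟨C, hC⟩ := (isCompact_stdSimplex ℝ A).exists_bound_of_continuousOn hV.continuousOn
  obtain ⟨W, hW, hVW, hWC⟩ :=
    hV.exists_lipschitzWith_norm_le_extension ((norm_nonneg _).trans (hC x₀ hx₀)) hC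
  have htan : ∀ x ∈ S, ∀ᶠ h in 𝓝 (0 : ℝ), x + h • W x ∈ S := fun x hx => by
    rw [← hVW hx]
    exact eventually_add_smul_mem_stdSimplex hx (hsum x hx) (hbd x hx)
  have htan_face : ∀ α, ∀ x ∈ {x ∈ S | x α = 0}, ∀ᶠ h in 𝓝 (0 : ℝ),
      x + h • W x ∈ {x ∈ S | x α = 0} := fun α x ⟨hx, hxα⟩ =>
    (htan x hx).mono fun h hh => ⟨hh, by simp [hxα, ← hVW hx, hbd x hx α hxα]⟩
  obtain ⟨y, hy0, hy⟩ := exists_forall_hasDerivAt_of_lipschitzWith hW (C := C.toNNReal)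
    (fun x => (hWC x).trans (Real.le_coe_toNNReal C)) x₀
  have hyS : ∀ t, y t ∈ S := mem_of_hasDerivAt_of_eventually_add_smul_mem_nhds hW
    (isClosed_stdSimplex ℝ A) htan hy (t₀ := 0) (hy0 ▸ hx₀)
  have hyV : ∀ t, HasDerivAt y (V (y t)) t := fun t => hVW (hyS t) ▸ hy t
  refine ⟨⟨y, ⟨hyS, hy0, hyV⟩, fun x ⟨hxS, hx0, hx⟩ => ODE_solution_unique_univ
    (v := fun _ => V) (s := fun _ => S) (t₀ := 0) (fun _ => hV) (fun t => ⟨hx t, hxS t⟩)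
    (fun t => ⟨hyV t, hyS t⟩) (hx0.trans hy0.symm)⟩, fun x hxS hx0 hx t α => ?_⟩
  have hface : ∀ t₀, x t₀ α = 0 → ∀ t, x t α = 0 := fun t₀ h t =>
    (mem_of_hasDerivAt_of_eventually_add_smul_mem_nhds hW
      ((isClosed_stdSimplex ℝ A).inter (isClosed_eq (continuous_apply α) continuous_const))
      (htan_face α) (fun t => (hVW (hxS t)).symm ▸ hx t) ⟨hxS t₀, h⟩ t).2
  exact ⟨fun h => hx0 ▸ hface t h 0, fun h => hface 0 (hx0 ▸ h) t⟩

/-- Proposition wp(i): well-posedness and support invariance of continuous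
Riemannian game dynamics.  If `V` is Lipschitz on the simplex, its components sum to zero,
and `V_α(x) = 0` whenever `x_α = 0`, then from every initial condition in the simplex there
is a unique differentiable solution `x : ℝ → X` of `ẋ = V(x)`, and every such solution has
constant support. -/
theorem stmt_19 {A : Type*} [Fintype A] [Nonempty A]
    (V : (A → ℝ) → (A → ℝ)) (K : NNReal) (hV : LipschitzOnWith K V (stdSimplex ℝ A))
    (hsum : ∀ x ∈ stdSimplex ℝ A, (∑ α, V x α) = 0)
    (hbd : ∀ x ∈ stdSimplex ℝ A, ∀ α : A, x α = 0 → V x α = 0) :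
    ∀ x₀ ∈ stdSimplex ℝ A,
      (∃! x : ℝ → (A → ℝ), (∀ t : ℝ, x t ∈ stdSimplex ℝ A) ∧ x 0 = x₀ ∧
        ∀ t : ℝ, HasDerivAt x (V (x t)) t) ∧
      (∀ x : ℝ → (A → ℝ), (∀ t : ℝ, x t ∈ stdSimplex ℝ A) → x 0 = x₀ →
        (∀ t : ℝ, HasDerivAt x (V (x t)) t) →
        ∀ t : ℝ, ∀ α : A, (x t α = 0 ↔ x₀ α = 0)) :=
  stmt_19_general V K hV hsum hbd
end
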